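/- arXiv:2308.10833 — 3 statements merged into one kernel-verified Lean document; each statement's English description precedes it below -/
import Mathlib

section
/- Fix k ≥ 2. There exists a constant C = C(k) > 0 such that every k-uniform hypergraph H with m ≥ 1 edges and no isolated vertices admits a strong coloring with color classes V_1, …, V_t satisfying t ≤ C·√m and ∏_{i=1}^t |V_i| ≤ 2^{C·√m}. -/
open Finset

/-!
A strong coloring of `E` is a proper coloring of its 2-shadow, in which a vertex of degree `d`
has at most `k d` neighbours. Let `4 ^ (S - 1) < m ≤ 4 ^ S`, so that `2 ^ S ≤ 2 √m`, and sort
the vertices into levels by `⌊log₂ d⌋`, all vertices of degree at least `2 ^ S` forming the top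
level `S`. Double counting `∑ d = k m` shows that level `s` has at most `k 2 ^ s 4 ^ (S - s)`
vertices, and inside it every vertex has at most `k 2 ^ (s + 1)` neighbours. A greedy coloring
that never lets a class grow beyond `4 ^ (S - s)` vertices then colors level `s` with
`3 k 2 ^ s` classes. Over all levels this gives at most `6 k 2 ^ S` classes, and
`log₂ ∏ |V_i| ≤ ∑ₛ 3 k 2 ^ s · 2 (S - s) ≤ 12 k 2 ^ S`.
-/

namespace SimpleGraph

variable {V : Type*} (G : SimpleGraph V)

theorem exists_coloring_of_card_le_mul [DecidableEq V] [DecidableRel G.Adj] {Δ M B : ℕ}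
    (S : Finset V)
    (hdeg : ∀ v ∈ S, #{w ∈ S | G.Adj v w} ≤ Δ) (hS : #S ≤ M * B) :
    ∃ c : V → ℕ, (∀ v ∈ S, c v < Δ + M) ∧ (∀ v ∈ S, ∀ w ∈ S, G.Adj v w → c v ≠ c w) ∧
      ∀ i, #{v ∈ S | c v = i} ≤ B := by
  induction S using Finset.induction_on with
  | empty => exact ⟨0, by simp, by simp, by simp⟩
  | insert a s ha ih =>
    obtain ⟨c, hlt, hproper, hsize⟩ := ih
      (fun v hv => (card_le_card (filter_subset_filter _ (subset_insert a s))).trans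
        (hdeg v (mem_insert_of_mem hv)))
      ((card_le_card (subset_insert a s)).trans hS)
    set full := {i ∈ range (Δ + M) | B ≤ #{v ∈ s | c v = i}}
    have hfull : #full < M := by
      have : #full * B < M * B := calc
        #full * B ≤ ∑ i ∈ full, #{v ∈ s | c v = i} :=
          card_nsmul_le_sum full _ B fun i hi => (mem_filter.1 hi).2
        _ ≤ ∑ i ∈ range (Δ + M), #{v ∈ s | c v = i} :=
          sum_le_sum_of_subset fun i hi => (mem_filter.1 hi).1
        _ = #s := (card_eq_sum_card_fiberwise fun v hv => mem_range.2 (hlt v hv)).symm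
        _ < M * B := by rw [card_insert_of_notMem ha] at hS; omega
      exact Nat.lt_of_mul_lt_mul_right this
    have hnbr : #({w ∈ s | G.Adj a w}.image c) ≤ Δ :=
      card_image_le.trans <| (card_le_card (filter_subset_filter _ (subset_insert a s))).trans
        (hdeg a (mem_insert_self a s))
    obtain ⟨i, hi, hfree⟩ : ∃ i ∈ range (Δ + M), i ∉ {w ∈ s | G.Adj a w}.image c ∪ full :=
      exists_mem_notMem_of_card_lt_card <| by
        rw [card_range]; exact (card_union_le _ _).trans_lt (by omega)
    rw [mem_union, not_or] at hfree
    have hnbr_ne : ∀ w ∈ s, G.Adj a w → c w ≠ i := fun w hw haw h =>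
      hfree.1 (h ▸ mem_image_of_mem c (mem_filter.2 ⟨hw, haw⟩))
    have hnot_full : #{v ∈ s | c v = i} < B :=
      not_le.1 fun h => hfree.2 (mem_filter.2 ⟨hi, h⟩)
    have hupdate : ∀ v ∈ s, Function.update c a i v = c v := fun v hv =>
      Function.update_of_ne (ne_of_mem_of_not_mem hv ha) _ _
    refine ⟨Function.update c a i, ?_, ?_, ?_⟩
    · intro v hv
      rcases mem_insert.1 hv with rfl | hvs
      · rw [Function.update_self]; exact mem_range.1 hi
      · rw [hupdate v hvs]; exact hlt v hvs
    · intro v hv w hw hvw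
      rcases mem_insert.1 hv with rfl | hvs <;> rcases mem_insert.1 hw with rfl | hws
      · exact absurd hvw G.irrefl
      · rw [Function.update_self, hupdate w hws]; exact (hnbr_ne w hws hvw).symm
      · rw [Function.update_self, hupdate v hvs]; exact hnbr_ne v hvs hvw.symm
      · rw [hupdate v hvs, hupdate w hws]; exact hproper v hvs w hws hvw
    · intro j
      rw [filter_insert, filter_congr fun v hv => by rw [hupdate v hv]]
      split_ifs with hj
      · rw [Function.update_self] at hj
        subst hj
        exact (card_insert_le _ _).trans hnot_full
      · exact hsize j

theorem exists_coloring_of_levels [Fintype V] {ι : Type*} [DecidableEq ι] (ℓ : V → ι)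
    (I : Finset ι)
    (hℓ : ∀ v, ℓ v ∈ I) (N B : ι → ℕ) (hB : ∀ s ∈ I, 1 ≤ B s)
    (hcol : ∀ s ∈ I, ∃ col : V → ℕ, (∀ v ∈ ({v | ℓ v = s} : Finset V), col v < N s) ∧
      (∀ v ∈ ({v | ℓ v = s} : Finset V), ∀ w ∈ ({v | ℓ v = s} : Finset V),
        G.Adj v w → col v ≠ col w) ∧
      ∀ i, #{v ∈ {v | ℓ v = s} | col v = i} ≤ B s) :
    ∃ C : G.Coloring (Σ _ : ι, ℕ), #(univ.image C) ≤ ∑ s ∈ I, N s ∧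
      ∏ x ∈ univ.image C, #{v | C v = x} ≤ ∏ s ∈ I, B s ^ N s := by
  choose! col hlt hproper hsize using hcol
  let C : G.Coloring (Σ _ : ι, ℕ) := Coloring.mk (fun v => ⟨ℓ v, col (ℓ v) v⟩)
    fun {v w} hvw h => by
      obtain ⟨hℓvw, hcol⟩ := Sigma.mk.inj_iff.1 h
      rw [hℓvw, heq_eq_eq] at hcol
      exact hproper (ℓ w) (hℓ w) v (by simpa using hℓvw) w (by simp) hvw hcol
  set T := I.sigma fun s => range (N s)
  have himage : univ.image C ⊆ T := by
    simp only [subset_iff, mem_image, mem_univ, true_and, forall_exists_index,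
      forall_apply_eq_imp_iff, T, mem_sigma, mem_range]
    exact fun v => ⟨hℓ v, hlt (ℓ v) (hℓ v) v (by simp)⟩
  have hfiber : ∀ x ∈ T, #{v | C v = x} ≤ B x.1 := by
    rintro ⟨s, i⟩ hx
    convert hsize s (mem_sigma.1 hx).1 i using 2
    ext v
    simp only [mem_filter, mem_univ, true_and]
    change (⟨ℓ v, col (ℓ v) v⟩ : Σ _ : ι, ℕ) = ⟨s, i⟩ ↔ _
    constructor
    · rintro h
      obtain ⟨rfl, hcol⟩ := Sigma.mk.inj_iff.1 h
      exact ⟨rfl, eq_of_heq hcol⟩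
    · rintro ⟨rfl, rfl⟩
      rfl
  refine ⟨C, (card_le_card himage).trans (by simp [T, card_sigma]), ?_⟩
  calc ∏ x ∈ univ.image C, #{v | C v = x}
      ≤ ∏ x ∈ univ.image C, B x.1 := prod_le_prod' fun x hx => hfiber x (himage hx)
    _ ≤ ∏ x ∈ T, B x.1 :=
        prod_le_prod_of_subset_of_one_le' himage fun x hx _ => hB x.1 (mem_sigma.1 hx).1
    _ = ∏ s ∈ I, B s ^ N s := by simp [T, prod_sigma]

end SimpleGraph

theorem sum_range_sub_mul_two_pow (S : ℕ) :
    ∑ s ∈ range (S + 1), (S - s) * 2 ^ s + S + 2 = 2 ^ (S + 1) := by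
  induction S with
  | zero => simp
  | succ S ih =>
    rw [sum_range_succ', pow_succ, ← ih]
    simp only [Nat.add_sub_add_right, pow_succ, Nat.sub_zero, pow_zero, ← mul_assoc, ← sum_mul]
    ring

theorem exists_fin_enum_fibers {V α : Type*} [Fintype V] [DecidableEq α] (c : V → α) :
    ∃ (t : ℕ) (W : Fin t → Finset V),
      (∀ i, (W i).Nonempty) ∧ (∀ i j, i ≠ j → Disjoint (W i) (W j)) ∧ (∀ v, ∃ i, v ∈ W i) ∧
      (∀ i, ∀ v ∈ W i, ∀ w ∈ W i, c v = c w) ∧ t = #(univ.image c) ∧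
      ∏ i, #(W i) = ∏ x ∈ univ.image c, #{v | c v = x} := by
  let e := (univ.image c).equivFin
  refine ⟨_, fun i => {v | c v = e.symm i}, fun i => ?_, fun i j hij => ?_, fun v => ?_,
    fun i v hv w hw => ?_, rfl, ?_⟩
  · obtain ⟨v, -, hv⟩ := mem_image.1 (e.symm i).2
    exact ⟨v, mem_filter.2 ⟨mem_univ v, hv⟩⟩
  · exact disjoint_filter.2 fun v _ hi hj =>
      hij (e.symm.injective (Subtype.ext (hi.symm.trans hj)))
  · exact ⟨e ⟨c v, mem_image_of_mem c (mem_univ v)⟩, by simp⟩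
  · exact (mem_filter.1 hv).2.trans (mem_filter.1 hw).2.symm
  · exact (e.symm.prod_comp fun x => #{v | c v = (x : α)}).trans
      (prod_coe_sort (univ.image c) fun x => #{v | c v = x})

theorem two_pow_clog_four_le_two_mul_sqrt {m : ℕ} (hm : 1 ≤ m) :
    (2 : ℝ) ^ Nat.clog 4 m ≤ 2 * √m := by
  have h4 : 4 ^ Nat.clog 4 m ≤ 4 * m := by
    rcases hm.eq_or_lt with rfl | hm
    · simp
    · have hlt := Nat.pow_pred_clog_lt_self (by norm_num : 1 < 4) hm
      rw [← Nat.succ_pred_eq_of_pos (Nat.clog_pos (by norm_num) hm), pow_succ']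
      omega
  calc (2 : ℝ) ^ Nat.clog 4 m ≤ √(4 * m) := by
        refine (Real.le_sqrt (by positivity) (by positivity)).2 ?_
        rw [← pow_mul, mul_comm, pow_mul]
        norm_num
        exact_mod_cast h4
    _ = 2 * √m := by
        rw [Real.sqrt_mul (by norm_num), show (4 : ℝ) = 2 ^ 2 by norm_num,
          Real.sqrt_sq (by norm_num)]

namespace Hypergraph

variable {V : Type*} (E : Finset (Finset V))

def shadow : SimpleGraph V where
  Adj v w := v ≠ w ∧ ∃ e ∈ E, v ∈ e ∧ w ∈ e
  symm := ⟨fun _ _ ⟨hne, e, he, hv, hw⟩ => ⟨hne.symm, e, he, hw, hv⟩⟩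
  loopless := ⟨fun _ h => h.1 rfl⟩

variable [DecidableEq V]

instance : DecidableRel (shadow E).Adj := fun v w =>
  inferInstanceAs (Decidable (v ≠ w ∧ ∃ e ∈ E, v ∈ e ∧ w ∈ e))

def degree (v : V) : ℕ := #{e ∈ E | v ∈ e}

def level (S : ℕ) (v : V) : ℕ := min (Nat.log 2 (degree E v)) S

variable {E} {k : ℕ}

theorem card_inter_le_one_of_isIndepSet {W : Finset V} (hW : (shadow E).IsIndepSet W)
    {e : Finset V} (he : e ∈ E) : #(e ∩ W) ≤ 1 :=
  card_le_one.2 fun v hv w hw => by_contra fun hne => by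
    rw [mem_inter] at hv hw
    exact hW hv.2 hw.2 hne ⟨hne, e, he, hv.1, hw.1⟩

theorem two_pow_level_le_degree (hdeg : ∀ v, degree E v ≠ 0) (S : ℕ) (v : V) :
    2 ^ level E S v ≤ degree E v :=
  (Nat.pow_le_pow_right two_pos (min_le_left _ _)).trans (Nat.pow_log_le_self 2 (hdeg v))

theorem degree_lt_two_pow_level_succ {S : ℕ} {v : V} (hv : level E S v < S) :
    degree E v < 2 ^ (level E S v + 1) := by
  have hlog : Nat.log 2 (degree E v) < S := by simpa [level] using hv
  simpa [level, min_eq_left hlog.le] using Nat.lt_pow_succ_log_self one_lt_two (degree E v)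

variable [Fintype V]

theorem card_adj_le (hE : ∀ e ∈ E, #e = k) (v : V) :
    #{w | (shadow E).Adj v w} ≤ k * degree E v := calc
  #{w | (shadow E).Adj v w} ≤ #({e ∈ E | v ∈ e}.biUnion id) :=
    card_le_card fun w hw => by
      obtain ⟨-, e, he, hve, hwe⟩ := (mem_filter.1 hw).2
      exact mem_biUnion.2 ⟨e, mem_filter.2 ⟨he, hve⟩, hwe⟩
  _ ≤ ∑ e ∈ E with v ∈ e, #e := card_biUnion_le
  _ = k * degree E v := by
    rw [sum_congr rfl fun e he => hE e (mem_filter.1 he).1, sum_const, smul_eq_mul, mul_comm,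
      degree]

theorem sum_degree (hE : ∀ e ∈ E, #e = k) : ∑ v, degree E v = k * #E := by
  have := sum_card_bipartiteAbove_eq_sum_card_bipartiteBelow (s := univ) (t := E)
    (r := fun v e => v ∈ e)
  simp only [bipartiteAbove, bipartiteBelow, filter_mem_eq_inter, univ_inter] at this
  simp only [degree]
  rw [this, sum_congr rfl hE, sum_const, smul_eq_mul, mul_comm]

theorem card_mul_le_of_le_degree (hE : ∀ e ∈ E, #e = k) {A : Finset V} {a : ℕ}
    (hA : ∀ v ∈ A, a ≤ degree E v) : #A * a ≤ k * #E := calc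
  #A * a ≤ ∑ v ∈ A, degree E v := card_nsmul_le_sum A _ a hA
  _ ≤ ∑ v, degree E v := sum_le_sum_of_subset (subset_univ A)
  _ = k * #E := sum_degree hE

theorem card_level_le (hE : ∀ e ∈ E, #e = k) (hdeg : ∀ v, degree E v ≠ 0) {S : ℕ}
    (hS : #E ≤ 4 ^ S) {s : ℕ} (hs : s ≤ S) :
    #{v | level E S v = s} ≤ k * 2 ^ s * 4 ^ (S - s) := by
  have h := card_mul_le_of_le_degree hE (A := {v | level E S v = s}) (a := 2 ^ s)
    fun v hv => (mem_filter.1 hv).2 ▸ two_pow_level_le_degree hdeg S v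
  have h4 : 4 ^ S = 2 ^ s * 2 ^ s * 4 ^ (S - s) := by
    rw [← mul_pow, show (2 * 2 : ℕ) = 4 from rfl, ← pow_add, Nat.add_sub_cancel' hs]
  refine Nat.le_of_mul_le_mul_right (h.trans ?_) (pow_pos two_pos s)
  calc k * #E ≤ k * 4 ^ S := Nat.mul_le_mul_left k hS
    _ = k * 2 ^ s * 4 ^ (S - s) * 2 ^ s := by rw [h4]; ring

theorem card_adj_level_le (hE : ∀ e ∈ E, #e = k) (hdeg : ∀ v, degree E v ≠ 0) {S : ℕ}
    (hS : #E ≤ 4 ^ S) {s : ℕ} (hs : s ≤ S) :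
    ∀ v ∈ ({v | level E S v = s} : Finset V),
      #{w ∈ {v | level E S v = s} | (shadow E).Adj v w} ≤ k * 2 ^ (s + 1) := fun v hv => by
  rcases hs.lt_or_eq with hs | rfl
  · have hv : level E S v = s := by simpa using hv
    calc #{w ∈ {v | level E S v = s} | (shadow E).Adj v w} ≤ #{w | (shadow E).Adj v w} :=
          card_le_card (filter_subset_filter _ (subset_univ _))
      _ ≤ k * degree E v := card_adj_le hE v
      _ ≤ k * 2 ^ (s + 1) :=
          Nat.mul_le_mul_left k (hv ▸ degree_lt_two_pow_level_succ (hv ▸ hs)).le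
  · calc #{w ∈ {v | level E s v = s} | (shadow E).Adj v w} ≤ #{v | level E s v = s} :=
          card_filter_le _ _
      _ ≤ k * 2 ^ s * 4 ^ (s - s) := card_level_le hE hdeg hS le_rfl
      _ ≤ k * 2 ^ (s + 1) := by
          rw [Nat.sub_self, pow_zero, mul_one]
          exact Nat.mul_le_mul_left k (Nat.pow_le_pow_right two_pos s.le_succ)

theorem exists_shadow_coloring (hE : ∀ e ∈ E, #e = k) (hdeg : ∀ v, degree E v ≠ 0) {S : ℕ}
    (hS : #E ≤ 4 ^ S) :
    ∃ C : (shadow E).Coloring (Σ _ : ℕ, ℕ), #(univ.image C) ≤ 6 * k * 2 ^ S ∧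
      ∏ x ∈ univ.image C, #{v | C v = x} ≤ 4 ^ (6 * k * 2 ^ S) := by
  obtain ⟨C, hC_card, hC_prod⟩ := (shadow E).exists_coloring_of_levels (level E S)
    (range (S + 1)) (fun v => mem_range.2 (Nat.lt_succ_of_le (min_le_right _ _)))
    (fun s => k * 2 ^ (s + 1) + k * 2 ^ s) (fun s => 4 ^ (S - s))
    (fun _ _ => Nat.one_le_pow _ _ (by norm_num))
    fun s hs => (shadow E).exists_coloring_of_card_le_mul _
      (card_adj_level_le hE hdeg hS (Nat.le_of_lt_succ (mem_range.1 hs)))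
      (card_level_le hE hdeg hS (Nat.le_of_lt_succ (mem_range.1 hs)))
  have hsum : ∀ f : ℕ → ℕ, ∑ s ∈ range (S + 1), f s * (k * 2 ^ (s + 1) + k * 2 ^ s) =
      3 * k * ∑ s ∈ range (S + 1), f s * 2 ^ s := fun f => by
    rw [mul_sum]; exact sum_congr rfl fun s _ => by ring
  refine ⟨C, hC_card.trans ?_, hC_prod.trans ?_⟩
  · calc ∑ s ∈ range (S + 1), (k * 2 ^ (s + 1) + k * 2 ^ s)
        = 3 * k * ∑ s ∈ range (S + 1), 2 ^ s := by simpa using hsum 1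
      _ ≤ 3 * k * 2 ^ (S + 1) :=
        Nat.mul_le_mul_left _ (Nat.geomSum_lt le_rfl fun s hs => mem_range.1 hs).le
      _ = 6 * k * 2 ^ S := by ring
  · simp_rw [← pow_mul]
    rw [prod_pow_eq_pow_sum, hsum]
    refine Nat.pow_le_pow_right (by norm_num) ?_
    calc 3 * k * ∑ s ∈ range (S + 1), (S - s) * 2 ^ s ≤ 3 * k * 2 ^ (S + 1) :=
          Nat.mul_le_mul_left _ (by have := sum_range_sub_mul_two_pow S; omega)
      _ = 6 * k * 2 ^ S := by ring

end Hypergraph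

theorem strong_coloring_exists_general (k : ℕ) :
    ∃ C : ℝ, 0 < C ∧
      ∀ (V : Type) [Fintype V] [DecidableEq V] (E : Finset (Finset V)) (m : ℕ),
        (∀ e ∈ E, e.card = k) →
        (∀ v : V, ∃ e ∈ E, v ∈ e) →
        E.card = m → 1 ≤ m →
        ∃ (t : ℕ) (W : Fin t → Finset V),
          (∀ i, (W i).Nonempty) ∧
          (∀ i j, i ≠ j → Disjoint (W i) (W j)) ∧
          (∀ v : V, ∃ i, v ∈ W i) ∧
          (∀ e ∈ E, ∀ i, (e ∩ W i).card ≤ 1) ∧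
          (t : ℝ) ≤ C * Real.sqrt m ∧
          (∏ i, ((W i).card : ℝ)) ≤ 2 ^ (C * Real.sqrt m) := by
  refine ⟨24 * (k + 1), by positivity, ?_⟩
  intro V _ _ E m hE hcov hm hm1
  subst hm
  have hdeg : ∀ v, Hypergraph.degree E v ≠ 0 := fun v => by
    obtain ⟨e, he, hv⟩ := hcov v
    exact (card_pos.2 ⟨e, mem_filter.2 ⟨he, hv⟩⟩).ne'
  set S := Nat.clog 4 #E
  obtain ⟨C, hC_card, hC_prod⟩ :=
    Hypergraph.exists_shadow_coloring hE hdeg (Nat.le_pow_clog (by norm_num) #E)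
  obtain ⟨t, W, hne, hdisj, hcover, hsame, rfl, hW⟩ := exists_fin_enum_fibers C
  have hS : (2 : ℝ) ^ S ≤ 2 * √(#E : ℝ) := two_pow_clog_four_le_two_mul_sqrt hm1
  have hkS : 12 * k * 2 ^ S ≤ 24 * (k + 1) * √(#E : ℝ) := by
    have := mul_le_mul_of_nonneg_left hS (by positivity : (0 : ℝ) ≤ 6 * k)
    nlinarith [Real.sqrt_nonneg (#E : ℝ)]
  refine ⟨_, W, hne, hdisj, hcover, fun e he i => Hypergraph.card_inter_le_one_of_isIndepSet
    (fun v hv w hw _ hvw => C.valid hvw (hsame i v hv w hw)) he, ?_, ?_⟩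
  · have h : (#(univ.image C) : ℝ) ≤ 6 * k * 2 ^ S := by exact_mod_cast hC_card
    nlinarith [pow_pos (two_pos : (0 : ℝ) < 2) S]
  · calc ∏ i, ((W i).card : ℝ) = ((∏ x ∈ univ.image C, #{v | C v = x} : ℕ) : ℝ) := by
          rw [← hW]; push_cast; rfl
      _ ≤ ((4 ^ (6 * k * 2 ^ S) : ℕ) : ℝ) := by exact_mod_cast hC_prod
      _ = 2 ^ ((12 * k * 2 ^ S : ℕ) : ℝ) := by
          rw [Real.rpow_natCast]; push_cast; rw [show (4 : ℝ) = 2 ^ 2 by norm_num, ← pow_mul]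
          ring_nf
      _ ≤ 2 ^ (24 * (k + 1) * √(#E : ℝ)) :=
          Real.rpow_le_rpow_of_exponent_le (by norm_num) (by push_cast; exact hkS)

/-- For every `k ≥ 2` there is `C > 0` such that every `k`-uniform hypergraph with
`m ≥ 1` edges and no isolated vertices has a strong coloring (a partition of the
vertex set into classes such that every edge meets each class in at most one vertex)
with `t ≤ C * √m` classes whose sizes have product at most `2 ^ (C * √m)`. -/
theorem strong_coloring_exists (k : ℕ) (hk : 2 ≤ k) :
    ∃ C : ℝ, 0 < C ∧
      ∀ (V : Type) [Fintype V] [DecidableEq V] (E : Finset (Finset V)) (m : ℕ),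
        (∀ e ∈ E, e.card = k) →
        (∀ v : V, ∃ e ∈ E, v ∈ e) →
        E.card = m → 1 ≤ m →
        ∃ (t : ℕ) (W : Fin t → Finset V),
          (∀ i, (W i).Nonempty) ∧
          (∀ i j, i ≠ j → Disjoint (W i) (W j)) ∧
          (∀ v : V, ∃ i, v ∈ W i) ∧
          (∀ e ∈ E, ∀ i, (e ∩ W i).card ≤ 1) ∧
          (t : ℝ) ≤ C * Real.sqrt m ∧
          (∏ i, ((W i).card : ℝ)) ≤ 2 ^ (C * Real.sqrt m) :=
  strong_coloring_exists_general k
end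

section
/- (Erdős–Rado) For all positive integers q and k with k ≥ 2 there is a constant C' = C'(q,k) > 0 such that for every n, the q-color Ramsey number of the complete k-uniform hypergraph on n vertices satisfies r_k(n; q) ≤ tw_k(C'·n). -/
open Finset

/-- The tower function: `tw 1 x = x` and `tw k x = 2 ^ tw (k-1) x` for `k ≥ 2`. -/
noncomputable def tw : ℕ → ℝ → ℝ
  | 0, x => x
  | 1, x => x
  | (k + 2), x => 2 ^ tw (k + 1) x

/-- The `q`-color Ramsey number of the complete `k`-uniform hypergraph on `n` vertices:
the least `N` such that every `q`-coloring of the finite subsets of `Fin N` admits an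
`n`-element set all of whose `k`-element subsets receive the same color. -/
noncomputable def cliqueRamsey (k q n : ℕ) : ℕ :=
  sInf {N : ℕ | ∀ χ : Finset (Fin N) → Fin q,
    ∃ S : Finset (Fin N), S.card = n ∧ ∃ c : Fin q, ∀ e ⊆ S, e.card = k → χ e = c}

/-!
Erdős–Rado stepping up. Given a colouring `χ` of the `(s+2)`-subsets of a large set, choose
vertices `x₀, x₁, …` greedily while keeping a pool `A` of candidates, so that for every `s+1`
chosen vertices `T` the colour of `T ∪ {y}` is the same for all vertices `y` chosen after `T` or
still in `A`. Choosing `x_i` and keeping the largest class of `A` under the colour pattern of the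
sets `T ∪ {x_i, y}` loses a factor of at most `q ^ m ^ s` per step. After `m = r_{s+1}(n; q)`
steps, the colour of an `(s+2)`-set of chosen vertices depends only on its first `s+1` elements,
and an `n`-set of chosen vertices that is monochromatic for this induced colouring of `(s+1)`-sets
is monochromatic for `χ`. So
`r_{s+2}(n; q) ≤ (2 q ^ m ^ s) ^ m ≤ 2 ^ (2 q m ^ (s+1))`: starting from the pigeonhole bound
`r_1(n; q) ≤ q n`, each extra uniformity costs one level of the tower.
-/

lemma Real.self_le_two_rpow {x : ℝ} (hx : 0 ≤ x) : x ≤ 2 ^ x := by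
  rcases le_or_gt x 1 with hx1 | hx1
  · exact hx1.trans (Real.one_le_rpow one_le_two hx)
  · have := one_add_mul_self_le_rpow_one_add (s := 1) (by norm_num) hx1.le
    norm_num at this
    linarith

lemma tw_succ {k : ℕ} (hk : k ≠ 0) (x : ℝ) : tw (k + 1) x = 2 ^ tw k x := by
  obtain ⟨j, rfl⟩ := Nat.exists_eq_succ_of_ne_zero hk
  rfl

lemma tw_mono : ∀ k, Monotone (tw k)
  | 0 | 1 => monotone_id
  | k + 2 => fun _ _ h => Real.rpow_le_rpow_of_exponent_le one_le_two (tw_mono (k + 1) h)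

lemma self_le_tw {k : ℕ} (hk : k ≠ 0) {x : ℝ} (hx : 0 ≤ x) : x ≤ tw k x := by
  induction k with
  | zero => exact absurd rfl hk
  | succ k ih =>
    rcases eq_or_ne k 0 with rfl | hk0
    · exact le_rfl
    · rw [tw_succ hk0]
      exact (ih hk0).trans (Real.self_le_two_rpow (hx.trans (ih hk0)))

lemma add_mul_tw_le {k : ℕ} (hk : k ≠ 0) {x p c : ℝ} (hx : 1 ≤ x) (hp : 1 ≤ p)
    (hc : 0 ≤ c) :
    c + p * tw k x ≤ tw k (p * x + c + k) := by
  induction k generalizing p c with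
  | zero => exact absurd rfl hk
  | succ k ih =>
    rcases eq_or_ne k 0 with rfl | hk0
    · simp only [tw]
      linarith
    rw [tw_succ hk0, tw_succ hk0]
    set t := tw k x
    have hexp : t + (c + p) ≤ tw k (p * x + c + (k + 1 : ℕ)) :=
      calc t + (c + p) = (c + p) + 1 * t := by ring
        _ ≤ tw k (1 * x + (c + p) + k) := ih hk0 le_rfl (by linarith)
        _ ≤ tw k (p * x + c + (k + 1 : ℕ)) := tw_mono k (by push_cast; nlinarith)
    have ht : 0 ≤ t := by linarith [self_le_tw hk0 (x := x) (by linarith)]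
    have h2t : (1 : ℝ) ≤ 2 ^ t := Real.one_le_rpow one_le_two ht
    calc c + p * 2 ^ t ≤ (c + p) * 2 ^ t := by nlinarith
      _ ≤ 2 ^ (c + p) * 2 ^ t := by gcongr; exact Real.self_le_two_rpow (by linarith)
      _ = 2 ^ (t + (c + p)) := by rw [← Real.rpow_add two_pos, add_comm]
      _ ≤ 2 ^ tw k (p * x + c + (k + 1 : ℕ)) := Real.rpow_le_rpow_of_exponent_le one_le_two hexp

lemma mul_tw_pow_le {k : ℕ} (hk : k ≠ 0) {x c : ℝ} (hx : 1 ≤ x) (hc : 1 ≤ c) :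
    c * tw k x ^ k ≤ tw k (k * c * x + k) := by
  obtain ⟨j, rfl⟩ := Nat.exists_eq_succ_of_ne_zero hk
  rcases eq_or_ne j 0 with rfl | hj
  · simp only [tw, Nat.cast_one]
    linarith
  rw [tw_succ hj, tw_succ hj]
  set t := tw j x
  have hexp : (j + 1) * t + c ≤ tw j ((j + 1 : ℕ) * c * x + (j + 1 : ℕ)) :=
    calc (j + 1) * t + c = c + (j + 1) * t := by ring
      _ ≤ tw j ((j + 1) * x + c + j) := add_mul_tw_le hj hx (by linarith) (by linarith)
      _ ≤ tw j ((j + 1 : ℕ) * c * x + (j + 1 : ℕ)) := by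
        apply tw_mono
        push_cast
        have hjc : (0 : ℝ) ≤ (j + 1) * (c - 1) := mul_nonneg (by positivity) (by linarith)
        nlinarith [mul_le_mul_of_nonneg_left hx hjc]
  calc c * (2 ^ t) ^ (j + 1) = c * 2 ^ ((j + 1) * t) := by
        rw [← Real.rpow_natCast, ← Real.rpow_mul zero_le_two]; push_cast; ring_nf
    _ ≤ 2 ^ c * 2 ^ ((j + 1) * t) := by gcongr; exact Real.self_le_two_rpow (by linarith)
    _ = 2 ^ ((j + 1) * t + c) := by rw [← Real.rpow_add two_pos, add_comm]
    _ ≤ 2 ^ tw j ((j + 1 : ℕ) * c * x + (j + 1 : ℕ)) :=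
        Real.rpow_le_rpow_of_exponent_le one_le_two hexp

lemma List.mem_take_append_singleton {α : Type*} {L : List α} {x t : α} {j : ℕ}
    (h : t ∈ (L ++ [x]).take j) : t ∈ L.take j ∨ t = x := by
  rw [List.take_append, List.mem_append] at h
  exact h.imp_right fun h => List.mem_singleton.mp (List.mem_of_mem_take h)

lemma List.mem_drop_append_singleton {α : Type*} {L : List α} {x t : α} {j : ℕ}
    (h : t ∈ (L ++ [x]).drop j) : t ∈ L.drop j ∨ t = x := by
  rw [List.drop_append, List.mem_append] at h
  exact h.imp_right fun h => List.mem_singleton.mp (List.mem_of_mem_drop h)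

section EndHomogeneous

variable {α κ : Type*} [DecidableEq α]

/-- `L` lists the vertices chosen so far and `A` the pool of candidates for later ones. -/
def EndHomogeneous (s : ℕ) (χ : Finset α → κ) (L : List α) (A : Finset α) : Prop :=
  ∀ j, ∀ T ⊆ (L.take j).toFinset, T.card = s → ∀ y y' : α,
    (y ∈ A ∨ y ∈ L.drop j) → (y' ∈ A ∨ y' ∈ L.drop j) →
      χ (insert y T) = χ (insert y' T)

variable {s : ℕ} {χ : Finset α → κ} {L : List α} {A B : Finset α} {x : α}

lemma endHomogeneous_nil : EndHomogeneous (s + 1) χ [] A := by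
  intro j T hT hcard
  simp_all

lemma EndHomogeneous.append_singleton (h : EndHomogeneous (s + 1) χ L A) (hxA : x ∈ A)
    (hxL : x ∉ L) (hBA : B ⊆ A)
    (hB : ∀ T ⊆ L.toFinset, T.card = s → ∀ y ∈ B, ∀ y' ∈ B,
      χ (insert y (insert x T)) = χ (insert y' (insert x T))) :
    EndHomogeneous (s + 1) χ (L ++ [x]) B := by
  intro j T hT hcard y y' hy hy'
  by_cases hxT : x ∈ T
  · have hj : L.length < j := by
      by_contra! hj
      have := hT hxT
      rw [List.mem_toFinset, List.take_append_of_le_length hj] at this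
      exact hxL (List.mem_of_mem_take this)
    have hdrop : (L ++ [x]).drop j = [] := List.drop_eq_nil_of_le (by simp; omega)
    simp only [hdrop, List.not_mem_nil, or_false] at hy hy'
    rw [← insert_erase hxT]
    refine hB _ (fun t ht => ?_) (by rw [card_erase_of_mem hxT, hcard]; rfl) y hy y' hy'
    have htL :=
      List.mem_take_append_singleton (List.mem_toFinset.mp (hT (mem_of_mem_erase ht)))
    exact List.mem_toFinset.mpr (List.mem_of_mem_take (htL.resolve_right (ne_of_mem_erase ht)))
  · have hxA' : ∀ z, (z ∈ B ∨ z ∈ (L ++ [x]).drop j) → z ∈ A ∨ z ∈ L.drop j := by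
      rintro z (hz | hz)
      · exact Or.inl (hBA hz)
      · exact (List.mem_drop_append_singleton hz).elim Or.inr
          fun hzx => Or.inl (hzx ▸ hxA)
    refine h j T (fun t ht => ?_) hcard y y' (hxA' y hy) (hxA' y' hy')
    have htL := List.mem_take_append_singleton (List.mem_toFinset.mp (hT ht))
    exact List.mem_toFinset.mpr (htL.resolve_right fun htx => hxT (htx ▸ ht))

lemma EndHomogeneous.exists_append_singleton [Fintype κ] [Nonempty κ]
    (h : EndHomogeneous (s + 1) χ L A) (hxA : x ∈ A) (hxL : x ∉ L) {r : ℕ}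
    (hr : Fintype.card κ ^ L.length ^ s * r ≤ (A.erase x).card) :
    ∃ B, EndHomogeneous (s + 1) χ (L ++ [x]) B ∧ B ⊆ A.erase x ∧ r ≤ B.card := by
  classical
  let P := L.toFinset.powersetCard s
  let type (y : α) (T : P) : κ := χ (insert y (insert x T.1))
  have hcard : Fintype.card (P → κ) ≤ Fintype.card κ ^ L.length ^ s := by
    rw [Fintype.card_fun, Fintype.card_coe, card_powersetCard]
    exact Nat.pow_le_pow_right Fintype.card_pos
      ((Nat.choose_le_pow _ _).trans (Nat.pow_le_pow_left (List.toFinset_card_le L) s))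
  obtain ⟨v, -, hv⟩ := exists_le_card_fiber_of_mul_le_card_of_maps_to (f := type)
    (fun _ _ => mem_univ _) univ_nonempty
    (by rw [card_univ]; exact (Nat.mul_le_mul_right r hcard).trans hr)
  refine ⟨(A.erase x).filter (type · = v), h.append_singleton hxA hxL
    ((filter_subset _ _).trans (erase_subset _ _)) ?_, filter_subset _ _, hv⟩
  intro T hT hTs y hy y' hy'
  exact congrFun ((mem_filter.mp hy).2.trans (mem_filter.mp hy').2.symm)
    ⟨T, mem_powersetCard.mpr ⟨hT, hTs⟩⟩

lemma exists_endHomogeneous [Fintype κ] [Nonempty κ] (χ : Finset α → κ) (A : Finset α)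
    {m : ℕ} (hA : (2 * Fintype.card κ ^ m ^ s) ^ m ≤ A.card) {i : ℕ} (hi : i ≤ m) :
    ∃ L B, L.length = i ∧ L.Nodup ∧ (∀ a ∈ L, a ∉ B) ∧
      EndHomogeneous (s + 1) χ L B ∧ (2 * Fintype.card κ ^ m ^ s) ^ (m - i) ≤ B.card := by
  induction i with
  | zero => exact ⟨[], A, rfl, List.nodup_nil, by simp, endHomogeneous_nil, hA⟩
  | succ i ih =>
    obtain ⟨L, B, hlen, hnodup, hdisj, hL, hB⟩ := ih (by omega)
    set K := Fintype.card κ ^ m ^ s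
    have hK : 0 < K := Nat.pow_pos Fintype.card_pos
    obtain ⟨x, hx⟩ : B.Nonempty := card_pos.mp (lt_of_lt_of_le (by positivity) hB)
    have hxL : x ∉ L := fun h => hdisj x h hx
    have hcount :
        Fintype.card κ ^ L.length ^ s * (2 * K) ^ (m - (i + 1)) ≤ (B.erase x).card := by
      have hKi : Fintype.card κ ^ L.length ^ s ≤ K :=
        Nat.pow_le_pow_right Fintype.card_pos (Nat.pow_le_pow_left (by omega) s)
      have hD : 1 ≤ (2 * K) ^ (m - (i + 1)) := Nat.one_le_pow _ _ (by omega)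
      rw [show m - i = m - (i + 1) + 1 by omega, pow_succ] at hB
      rw [card_erase_of_mem hx]
      apply Nat.le_sub_one_of_lt
      nlinarith
    obtain ⟨B', hL', hB'B, hB'⟩ := hL.exists_append_singleton hx hxL hcount
    refine ⟨L ++ [x], B', by simp [hlen], hnodup.append (List.nodup_singleton x) (by simpa),
      ?_, hL', hB'⟩
    intro a ha haB'
    rcases List.mem_append.mp ha with ha | ha
    · exact hdisj a ha (mem_of_mem_erase (hB'B haB'))
    · obtain rfl := List.mem_singleton.mp ha
      exact notMem_erase a B (hB'B haB')

lemma EndHomogeneous.apply_insert_get (h : EndHomogeneous s χ L A) (hnodup : L.Nodup) {y : α}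
    (hy : y ∈ A) {j : Fin L.length} {T : Finset (Fin L.length)} (hTj : ∀ t ∈ T, t < j)
    (hT : T.card = s) : χ (insert (L.get j) (T.image L.get)) = χ (insert y (T.image L.get)) := by
  refine h j (T.image L.get) ?_ ?_ (L.get j) y (Or.inr ?_) (Or.inl hy)
  · intro a ha
    obtain ⟨t, ht, rfl⟩ := mem_image.mp ha
    exact List.mem_toFinset.mpr
      (List.mem_take_iff_getElem.mpr ⟨t, lt_min (hTj t ht) t.isLt, rfl⟩)
  · rwa [card_image_of_injective _ (List.nodup_iff_injective_get.mp hnodup)]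
  · exact List.mem_drop_iff_getElem.mpr ⟨0, by simp, rfl⟩

end EndHomogeneous

def stepUpBound (q s m : ℕ) : ℕ := (2 * q ^ m ^ s) ^ m

def HasRamseyProperty (k q n N : ℕ) : Prop :=
  ∀ χ : Finset (Fin N) → Fin q,
    ∃ S : Finset (Fin N), S.card = n ∧ ∃ c : Fin q, ∀ e ⊆ S, e.card = k → χ e = c

namespace HasRamseyProperty

variable {k q n m : ℕ}

lemma cliqueRamsey_le {N : ℕ} (h : HasRamseyProperty k q n N) : cliqueRamsey k q n ≤ N :=
  Nat.sInf_le h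

lemma zero {s : ℕ} : HasRamseyProperty (s + 1) q 0 0 :=
  fun χ => ⟨∅, rfl, χ ∅, fun e he hes => by simp [subset_empty.mp he] at hes⟩

lemma one (hq : 0 < q) (n : ℕ) : HasRamseyProperty 1 q n (q * n) := by
  intro χ
  obtain ⟨c, -, hc⟩ := exists_le_card_fiber_of_mul_le_card_of_maps_to
    (f := fun a : Fin (q * n) => χ {a}) (fun _ _ => mem_univ _)
    (univ_nonempty_iff.mpr (Fin.pos_iff_nonempty.mp hq)) (s := univ) (n := n) (by simp)
  obtain ⟨S, hSc, hS⟩ := exists_subset_card_eq hc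
  refine ⟨S, hS, c, fun e heS he => ?_⟩
  obtain ⟨a, rfl⟩ := card_eq_one.mp he
  exact (mem_filter.mp (hSc (heS (mem_singleton_self a)))).2

lemma stepUp {s : ℕ} (hq : 0 < q) (h : HasRamseyProperty (s + 1) q n m) :
    HasRamseyProperty (s + 2) q n (stepUpBound q s m) := by
  have : Nonempty (Fin q) := ⟨⟨0, hq⟩⟩
  intro χ
  obtain ⟨L, A, hlen, hnodup, -, hL, hA⟩ :=
    exists_endHomogeneous (s := s) χ univ (by rw [card_fin, Fintype.card_fin]; rfl) (le_refl m)
  obtain ⟨y, hy⟩ : A.Nonempty := card_pos.mp (by simpa using hA)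
  rw [← hlen] at h
  have hinj := List.nodup_iff_injective_get.mp hnodup
  obtain ⟨S, hS, c, hc⟩ := h fun T => χ (insert y (T.image L.get))
  refine ⟨S.image L.get, by rw [card_image_of_injective _ hinj, hS], c, fun e he hek => ?_⟩
  obtain ⟨e, heS, rfl⟩ := subset_image_iff.mp he
  rw [card_image_of_injective _ hinj] at hek
  have hne : e.Nonempty := card_pos.mp (by omega)
  have hmax := max'_mem e hne
  rw [← insert_erase hmax, image_insert, hL.apply_insert_get hnodup hy
    (fun _ => lt_max'_of_mem_erase_max' e hne) (by rw [card_erase_of_mem hmax, hek]; rfl)]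
  exact hc _ ((erase_subset _ _).trans heS) (by rw [card_erase_of_mem hmax, hek]; rfl)

end HasRamseyProperty

lemma stepUpBound_le_two_pow (q s m : ℕ) : stepUpBound q s m ≤ 2 ^ (2 * q * m ^ (s + 1)) :=
  calc (2 * q ^ m ^ s) ^ m = 2 ^ m * q ^ m ^ (s + 1) := by rw [mul_pow, ← pow_mul, ← pow_succ]
    _ ≤ 2 ^ m ^ (s + 1) * q ^ m ^ (s + 1) := by
        gcongr
        · norm_num
        · exact Nat.le_self_pow (Nat.succ_ne_zero s) m
    _ = (2 * q) ^ m ^ (s + 1) := (mul_pow ..).symm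
    _ ≤ (2 ^ (2 * q)) ^ m ^ (s + 1) := Nat.pow_le_pow_left Nat.lt_two_pow_self.le _
    _ = 2 ^ (2 * q * m ^ (s + 1)) := (pow_mul ..).symm

lemma stepUpBound_le_tw {q s m : ℕ} (hq : 0 < q) {x : ℝ} (hx : 1 ≤ x)
    (hm : (m : ℝ) ≤ tw (s + 1) x) :
    (stepUpBound q s m : ℝ) ≤ tw (s + 2) ((s + 1 : ℕ) * (2 * q) * x + (s + 1 : ℕ)) := by
  set y : ℝ := (s + 1 : ℕ) * (2 * q) * x + (s + 1 : ℕ)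
  have hexp : ((2 * q * m ^ (s + 1) : ℕ) : ℝ) ≤ tw (s + 1) y :=
    calc ((2 * q * m ^ (s + 1) : ℕ) : ℝ) = 2 * q * (m : ℝ) ^ (s + 1) := by push_cast; ring
      _ ≤ 2 * q * tw (s + 1) x ^ (s + 1) := by gcongr
      _ ≤ _ := mul_tw_pow_le (Nat.succ_ne_zero s) hx (by norm_cast; omega)
  calc (stepUpBound q s m : ℝ) ≤ ((2 ^ (2 * q * m ^ (s + 1)) : ℕ) : ℝ) := by
        exact_mod_cast stepUpBound_le_two_pow q s m
    _ = (2 : ℝ) ^ ((2 * q * m ^ (s + 1) : ℕ) : ℝ) := by rw [Real.rpow_natCast]; push_cast; rfl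
    _ ≤ 2 ^ tw (s + 1) y := Real.rpow_le_rpow_of_exponent_le one_le_two hexp
    _ = tw (s + 2) y := (tw_succ (Nat.succ_ne_zero s) _).symm

lemma exists_hasRamseyProperty_le_tw {q : ℕ} (hq : 0 < q) (s : ℕ) :
    ∃ C : ℝ, 1 ≤ C ∧ ∀ n, 1 ≤ n →
      ∃ N, HasRamseyProperty (s + 1) q n N ∧ (N : ℝ) ≤ tw (s + 1) (C * n) := by
  induction s with
  | zero =>
    refine ⟨q, by exact_mod_cast hq, fun n _ => ⟨q * n, .one hq n, ?_⟩⟩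
    push_cast
    rfl
  | succ s ih =>
    obtain ⟨C, hC, hN⟩ := ih
    have hs : (1 : ℝ) ≤ (s + 1 : ℕ) := by norm_cast; omega
    have hq' : (1 : ℝ) ≤ q := by exact_mod_cast hq
    have : 0 ≤ ((s + 1 : ℕ) : ℝ) * (2 * q) * C := by positivity
    refine ⟨(s + 1 : ℕ) * (2 * q) * C + (s + 1 : ℕ), by linarith, fun n hn => ?_⟩
    obtain ⟨m, hm, hmC⟩ := hN n hn
    have hn' : (1 : ℝ) ≤ n := by exact_mod_cast hn
    refine ⟨stepUpBound q s m, hm.stepUp hq,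
      (stepUpBound_le_tw hq (by nlinarith) hmC).trans (tw_mono _ ?_)⟩
    nlinarith

/-- Erdős–Rado: for all `q ≥ 1` and `k ≥ 2` there is `C' > 0` such that
`r_k(n; q) ≤ tw k (C' * n)` for every `n`. -/
theorem erdos_rado (q k : ℕ) (hq : 1 ≤ q) (hk : 2 ≤ k) :
    ∃ C' : ℝ, 0 < C' ∧ ∀ n : ℕ, (cliqueRamsey k q n : ℝ) ≤ tw k (C' * n) := by
  obtain ⟨s, rfl⟩ : ∃ s, k = s + 1 := ⟨k - 1, by omega⟩
  obtain ⟨C, hC, hN⟩ := exists_hasRamseyProperty_le_tw hq s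
  refine ⟨C, by linarith, fun n => ?_⟩
  rcases Nat.eq_zero_or_pos n with rfl | hn
  · have h0 : cliqueRamsey (s + 1) q 0 = 0 :=
      Nat.le_zero.mp HasRamseyProperty.zero.cliqueRamsey_le
    simpa [h0] using self_le_tw s.succ_ne_zero le_rfl
  · obtain ⟨N, hR, hNC⟩ := hN n hn
    exact (Nat.cast_le.mpr hR.cliqueRamsey_le).trans hNC
end

section
/- Let k ≥ 2, q ≥ 1 and t ≥ k be integers, let R = r_k(t; q), and let N ≥ R. Then for every coloring of the k-element subsets of an N-element set V with q colors, there exists a color c such that the number of t-element subsets S ⊆ V all of whose k-element subsets receive color c is at least binom(N, R) / (q · binom(N − t, R − t)). -/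
/-!
Every `R`-subset of the `N`-set contains a monochromatic `t`-set, and a `t`-set lies in
`binom(N - t, R - t)` of the `R`-subsets; so there are at least `binom(N, R) / binom(N - t, R - t)`
monochromatic `t`-sets, and some colour owns a `1/q` share of them.

That `R = r_k(t; q)` is finite, so that `R` itself arrows, is the Erdős–Rado stepping-up
argument: a greedily chosen end-homogeneous set of size `m + 1` for the colouring of
`(k+1)`-sets yields a `k`-colouring of its first `m` points, `e ↦ χ (e ∪ {max})`, and a
homogeneous set of that colouring is homogeneous for `χ`.
-/

open Finset

namespace Ramsey

/-- The arrow relation `N → (n)^k_q`, so that `cliqueRamsey k q n` is the least `N` with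
`Arrows k q n N`. -/
def Arrows (k q n N : ℕ) : Prop :=
  ∀ χ : Finset (Fin N) → Fin q,
    ∃ S : Finset (Fin N), S.card = n ∧ ∃ c : Fin q, ∀ e ⊆ S, e.card = k → χ e = c

theorem Arrows.exists_subset {k q n N : ℕ} (h : Arrows k q n N) {β : Type*} [DecidableEq β]
    {V : Finset β} (hV : N ≤ V.card) (χ : Finset β → Fin q) :
    ∃ S ⊆ V, S.card = n ∧ ∃ c : Fin q, ∀ e ⊆ S, e.card = k → χ e = c := by
  obtain ⟨f⟩ : Nonempty (Fin N ↪ V) := Function.Embedding.nonempty_of_card_le (by simpa using hV)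
  let g : Fin N ↪ β := f.trans (Function.Embedding.subtype _)
  obtain ⟨S, hS, c, hc⟩ := h fun e => χ (e.map g)
  refine ⟨S.map g, ?_, by simpa using hS, c, fun e he hek => ?_⟩
  · intro x hx
    obtain ⟨i, -, rfl⟩ := mem_map.1 hx
    exact (f i).2
  · obtain ⟨u, hu, rfl⟩ := subset_map_iff.1 he
    exact hc u hu (by simpa using hek)

theorem Arrows.le {k q n N : ℕ} (hq : 0 < q) (h : Arrows k q n N) : n ≤ N := by
  obtain ⟨S, hS, -⟩ := h fun _ => ⟨0, hq⟩
  simpa [hS] using S.card_le_univ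

theorem exists_subset_forall_color_insert_eq {α : Type*} [DecidableEq α] {q : ℕ}
    (χ : Finset α → Fin q) (Q s : Finset α) {n : ℕ} (hn : q ^ 2 ^ Q.card * n ≤ s.card) :
    ∃ s' ⊆ s, n ≤ s'.card ∧ ∀ y ∈ s', ∀ z ∈ s', ∀ e ⊆ Q, χ (insert y e) = χ (insert z e) := by
  let f : α → (Q.powerset → Fin q) := fun y e => χ (insert y e)
  obtain ⟨φ, -, hφ⟩ := exists_le_card_fiber_of_mul_le_card_of_maps_to (f := f)
    (fun _ _ => mem_univ _) ⟨fun _ => χ ∅, mem_univ _⟩ (by simpa using hn)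
  refine ⟨{y ∈ s | f y = φ}, filter_subset _ _, hφ, fun y hy z hz e he => ?_⟩
  exact congrFun ((mem_filter.1 hy).2.trans (mem_filter.1 hz).2.symm) ⟨e, mem_powerset.2 he⟩

theorem insert_union_subset_union {α : Type*} [DecidableEq α] {A A' : Finset α} {a : α}
    (P : Finset α) (ha : a ∈ A) (hA' : A' ⊆ A) : insert a P ∪ A' ⊆ P ∪ A := by
  rw [insert_union]
  exact insert_subset (mem_union_right _ ha) (union_subset_union Subset.rfl hA')

section EndHomogeneous

variable {α : Type*} [LinearOrder α] {k q : ℕ} {χ : Finset α → Fin q}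

def EndHomogeneous (k : ℕ) (χ : Finset α → Fin q) (P Y : Finset α) : Prop :=
  ∀ e ⊆ P, e.card = k → ∀ y ∈ Y, ∀ z ∈ Y, (∀ x ∈ e, x < y) → (∀ x ∈ e, x < z) →
    χ (insert y e) = χ (insert z e)

theorem EndHomogeneous.mono {P Y Y' : Finset α} (h : EndHomogeneous k χ P Y) (hY : Y' ⊆ Y) :
    EndHomogeneous k χ P Y' :=
  fun e he hek y hy z hz => h e he hek y (hY hy) z (hY hz)

theorem EndHomogeneous.extend {P A A' : Finset α} {a : α} (hPA : ∀ p ∈ P, ∀ b ∈ A, p < b)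
    (ha : a ∈ A) (hA' : A' ⊆ A) (h : EndHomogeneous k χ P (P ∪ A))
    (hc : ∀ y ∈ A', ∀ z ∈ A', ∀ e ⊆ insert a P, χ (insert y e) = χ (insert z e)) :
    EndHomogeneous k χ (insert a P) (insert a P ∪ A') := by
  intro e he hek y hy z hz hey hez
  by_cases hae : a ∈ e
  · have mem_of_lt : ∀ w ∈ insert a P ∪ A', a < w → w ∈ A' := by
      intro w hw haw
      rcases mem_union.1 hw with hw | hw
      · rcases mem_insert.1 hw with rfl | hw
        · exact absurd haw (lt_irrefl _)
        · exact absurd (hPA w hw a ha) haw.not_gt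
      · exact hw
    exact hc y (mem_of_lt y hy (hey a hae)) z (mem_of_lt z hz (hez a hae)) e he
  · have hsub := insert_union_subset_union P ha hA'
    exact h e ((subset_insert_iff_of_notMem hae).1 he) hek y (hsub hy) z (hsub hz) hey hez

/-- `P` is the part of the end-homogeneous set chosen so far and `A` the pool for its
continuation: each step adds the least element of the pool and keeps a largest colour class of
the rest, which costs a factor of at most `q ^ 2 ^ L` in the size of the pool. -/
theorem exists_endHomogeneous_of_le_card (χ : Finset α → Fin q) (L : ℕ) :
    ∀ (j : ℕ) (P A : Finset α), P.card + j ≤ L → (∀ p ∈ P, ∀ a ∈ A, p < a) →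
      EndHomogeneous k χ P (P ∪ A) → (q ^ 2 ^ L + 1) ^ j ≤ A.card →
      ∃ X ⊆ P ∪ A, X.card = P.card + j ∧ EndHomogeneous k χ X X
  | 0, P, _, _, _, h, _ => ⟨P, subset_union_left, rfl, h.mono subset_union_left⟩
  | j + 1, P, A, hL, hPA, h, hA => by
    set B := q ^ 2 ^ L
    have hAne : A.Nonempty := card_pos.1 (lt_of_lt_of_le (by positivity) hA)
    set a := A.min' hAne
    have haA : a ∈ A := A.min'_mem hAne
    have haP : a ∉ P := fun h => lt_irrefl a (hPA a h a haA)
    have hcard : (insert a P).card = P.card + 1 := card_insert_of_notMem haP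
    have hB : q ^ 2 ^ (insert a P).card ≤ B :=
      Nat.pow_le_pow_right (χ ∅).pos (Nat.pow_le_pow_right two_pos (by omega))
    have hpow : 1 ≤ (B + 1) ^ j := Nat.one_le_pow _ _ (Nat.succ_pos _)
    obtain ⟨A', hA'A, hA'card, hc⟩ :=
      exists_subset_forall_color_insert_eq χ (insert a P) (A.erase a) (n := (B + 1) ^ j) <| by
        calc q ^ 2 ^ (insert a P).card * (B + 1) ^ j ≤ B * (B + 1) ^ j := by gcongr
          _ ≤ (B + 1) ^ (j + 1) - 1 := by rw [pow_succ, mul_add_one, mul_comm B]; omega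
          _ ≤ A.card - 1 := Nat.sub_le_sub_right hA 1
          _ = (A.erase a).card := (card_erase_of_mem haA).symm
    have hord : ∀ p ∈ insert a P, ∀ b ∈ A', p < b := by
      intro p hp b hb
      obtain ⟨hba, hbA⟩ := mem_erase.1 (hA'A hb)
      rcases mem_insert.1 hp with rfl | hp
      · exact lt_of_le_of_ne (A.min'_le b hbA) (Ne.symm hba)
      · exact hPA p hp b hbA
    have hA'sub : A' ⊆ A := hA'A.trans (erase_subset _ _)
    obtain ⟨X, hX, hXcard, hXh⟩ := exists_endHomogeneous_of_le_card χ L j (insert a P) A'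
      (by omega) hord (h.extend hPA haA hA'sub hc) hA'card
    exact ⟨X, hX.trans (insert_union_subset_union P haA hA'sub), by omega, hXh⟩

theorem exists_endHomogeneous (k q j : ℕ) :
    ∃ M, ∀ χ : Finset (Fin M) → Fin q,
      ∃ X : Finset (Fin M), X.card = j ∧ EndHomogeneous k χ X X := by
  refine ⟨q * (q ^ 2 ^ j + 1) ^ j, fun χ => ?_⟩
  -- For `k = 0` the invariant at `P = ∅` asks the pool to be monochromatic on singletons.
  obtain ⟨A, -, hA, hc⟩ :=
    exists_subset_forall_color_insert_eq χ ∅ univ (n := (q ^ 2 ^ j + 1) ^ j) (by simp)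
  obtain ⟨X, -, hX, hXh⟩ := exists_endHomogeneous_of_le_card χ j j ∅ A (by simp) (by simp)
    (fun e he _ y hy z hz _ _ => hc y (by simpa using hy) z (by simpa using hz) e he) hA
  exact ⟨X, by simpa using hX, hXh⟩

theorem Arrows.exists_subset_of_endHomogeneous {n m : ℕ} (hm : Arrows k q n m) {X : Finset α}
    (hXcard : m + 1 ≤ X.card) (hX : EndHomogeneous k χ X X) :
    ∃ S ⊆ X, S.card = n ∧ ∃ c : Fin q, ∀ f ⊆ S, f.card = k + 1 → χ f = c := by
  have hXne : X.Nonempty := card_pos.1 (by omega)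
  set a := X.max' hXne
  obtain ⟨S, hSX, hS, c, hc⟩ := hm.exists_subset (V := X.erase a)
    (by rw [card_erase_of_mem (max'_mem _ _)]; omega) fun e => χ (insert a e)
  refine ⟨S, hSX.trans (erase_subset _ _), hS, c, fun f hf hfk => ?_⟩
  have hfne : f.Nonempty := card_pos.1 (by omega)
  set b := f.max' hfne
  have hbf : b ∈ f := max'_mem _ _
  have heS : f.erase b ⊆ S := (erase_subset _ _).trans hf
  have hek : (f.erase b).card = k := by rw [card_erase_of_mem hbf]; omega
  have heb : ∀ x ∈ f.erase b, x < b := fun x hx =>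
    lt_of_le_of_ne (f.le_max' x (mem_of_mem_erase hx)) (ne_of_mem_erase hx)
  have hea : ∀ x ∈ f.erase b, x < a := fun x hx =>
    have hxX := hSX (heS hx)
    lt_of_le_of_ne (X.le_max' x (mem_of_mem_erase hxX)) (ne_of_mem_erase hxX)
  calc χ f = χ (insert b (f.erase b)) := by rw [insert_erase hbf]
    _ = χ (insert a (f.erase b)) :=
      hX _ ((heS.trans hSX).trans (erase_subset _ _)) hek b
        (mem_of_mem_erase (hSX (hf hbf))) a (max'_mem _ _) heb hea
    _ = c := hc _ heS hek

end EndHomogeneous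

theorem exists_arrows (k q n : ℕ) : ∃ N, Arrows k q n N := by
  induction k with
  | zero => exact ⟨n, fun χ => ⟨univ, card_fin n, χ ∅, fun e _ he => by rw [card_eq_zero.1 he]⟩⟩
  | succ k ih =>
    obtain ⟨m, hm⟩ := ih
    obtain ⟨M, hM⟩ := exists_endHomogeneous k q (m + 1)
    refine ⟨M, fun χ => ?_⟩
    obtain ⟨X, hX, hXh⟩ := hM χ
    obtain ⟨S, -, hS⟩ := hm.exists_subset_of_endHomogeneous hX.ge hXh
    exact ⟨S, hS⟩

theorem arrows_cliqueRamsey (k q n : ℕ) : Arrows k q n (cliqueRamsey k q n) :=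
  Nat.sInf_mem (exists_arrows k q n)

end Ramsey

theorem choose_le_card_mul_choose_of_forall_exists_subset {α : Type*} [Fintype α] [DecidableEq α]
    {𝒢 : Finset (Finset α)} {t R : ℕ} (h𝒢 : ∀ S ∈ 𝒢, S.card = t) (htR : t ≤ R)
    (hcover : ∀ T : Finset α, T.card = R → ∃ S ∈ 𝒢, S ⊆ T) :
    (Fintype.card α).choose R ≤ 𝒢.card * (Fintype.card α - t).choose (R - t) := by
  calc (Fintype.card α).choose R = ((univ : Finset α).powersetCard R).card := by
        rw [card_powersetCard, card_univ]
    _ ≤ (𝒢.biUnion fun S => (univ.powersetCard R).filter (S ⊆ ·)).card := by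
      refine card_le_card fun T hT => ?_
      obtain ⟨S, hS, hST⟩ := hcover T (mem_powersetCard.1 hT).2
      exact mem_biUnion.2 ⟨S, hS, mem_filter.2 ⟨hT, hST⟩⟩
    _ ≤ ∑ S ∈ 𝒢, ((univ.powersetCard R).filter (S ⊆ ·)).card := card_biUnion_le
    _ = 𝒢.card * (Fintype.card α - t).choose (R - t) := by
      rw [sum_const_nat fun S hS => ?_]
      rw [card_filter_powersetCard_subset S univ R (subset_univ S) (h𝒢 S hS ▸ htR), card_univ,
        h𝒢 S hS]

theorem supersaturation_general (k q t : ℕ)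
    (R N : ℕ) (hR : R = cliqueRamsey k q t)
    (χ : Finset (Fin N) → Fin q) :
    ∃ c : Fin q,
      (N.choose R : ℝ) / (q * ((N - t).choose (R - t) : ℝ)) ≤
        (Nat.card {S : Finset (Fin N) // S.card = t ∧ ∀ e ⊆ S, e.card = k → χ e = c} : ℝ) := by
  have hq : 0 < q := (χ ∅).pos
  have hRarrows : Ramsey.Arrows k q t R := hR ▸ Ramsey.arrows_cliqueRamsey k q t
  let G : Fin q → Finset (Finset (Fin N)) :=
    fun c => {S | S.card = t ∧ ∀ e ⊆ S, e.card = k → χ e = c}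
  have hcount : N.choose R ≤ (univ.biUnion G).card * (N - t).choose (R - t) := by
    simpa using choose_le_card_mul_choose_of_forall_exists_subset (𝒢 := univ.biUnion G)
      (fun S hS => by
        obtain ⟨c, -, hc⟩ := mem_biUnion.1 hS
        exact (mem_filter.1 hc).2.1) (hRarrows.le hq) fun T hT => by
        obtain ⟨S, hST, hS, c, hc⟩ := hRarrows.exists_subset hT.ge χ
        exact ⟨S, mem_biUnion.2 ⟨c, mem_univ _, mem_filter.2 ⟨mem_univ _, hS, hc⟩⟩, hST⟩
  obtain ⟨c, -, hc⟩ := exists_max_image univ (fun c => (G c).card) ⟨χ ∅, mem_univ _⟩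
  have hbiUnion : (univ.biUnion G).card ≤ q * (G c).card :=
    card_biUnion_le.trans <| by
      simpa using sum_le_card_nsmul univ _ _ fun c' _ => hc c' (mem_univ _)
  refine ⟨c, ?_⟩
  rw [Nat.card_eq_fintype_card, Fintype.card_subtype]
  refine div_le_of_le_mul₀ (by positivity) (by positivity) ?_
  calc (N.choose R : ℝ) ≤ (q * (G c).card * (N - t).choose (R - t) : ℕ) := by
        exact_mod_cast hcount.trans (Nat.mul_le_mul_right _ hbiUnion)
    _ = _ := by push_cast; ring

/-- Supersaturation: if `R = r_k(t; q)` and `N ≥ R`, then for every `q`-coloring of the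
`k`-subsets of an `N`-set there is a color `c` such that the number of `t`-subsets all of
whose `k`-subsets get color `c` is at least `binom(N,R) / (q * binom(N-t, R-t))`. -/
theorem supersaturation (k q t : ℕ) (hk : 2 ≤ k) (hq : 1 ≤ q) (ht : k ≤ t)
    (R N : ℕ) (hR : R = cliqueRamsey k q t) (hN : R ≤ N)
    (χ : Finset (Fin N) → Fin q) :
    ∃ c : Fin q,
      (N.choose R : ℝ) / (q * ((N - t).choose (R - t) : ℝ)) ≤
        (Nat.card {S : Finset (Fin N) // S.card = t ∧ ∀ e ⊆ S, e.card = k → χ e = c} : ℝ) :=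
  supersaturation_general k q t R N hR χ
end
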